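/- arXiv:2208.07464 — 2 statements merged into one kernel-verified Lean document; each statement's English description precedes it below -/
import Mathlib

section
/- For the special case of a binary smoothed classifier: if p = g^μ_1(x) > 1/2, where g^μ_1(x) = E_{ε ~ N(0,σ²I)}[g_1(x+ε)] and g_1 : ℝ^d → [0,1], then g^μ_1(x+δ) > 1/2 for all δ with ‖δ‖₂ < σ Φ⁻¹(p). -/
open MeasureTheory ProbabilityTheory

/-- Standard normal CDF. -/
noncomputable def Phi : ℝ → ℝ := fun t => cdf (gaussianReal 0 1) t

/-- Inverse of the standard normal CDF. -/
noncomputable def PhiInv : ℝ → ℝ := Function.invFun Phi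

/-- Isotropic Gaussian `N(0, σ²I)` on `ℝ^d`. -/
noncomputable def gaussPi (d : ℕ) (σ : ℝ) : Measure (EuclideanSpace ℝ (Fin d)) :=
  Measure.map (WithLp.toLp 2) (Measure.pi (fun _ : Fin d => gaussianReal 0 (Real.toNNReal (σ ^ 2))))


open scoped ENNReal NNReal RealInnerProductSpace
open Set Function

section cdf

variable (μ : Measure ℝ) [IsProbabilityMeasure μ]

lemma continuous_cdf [NullSingletonClass μ] : Continuous (cdf μ) := by
  refine continuous_iff_continuousAt.2 fun a => ?_
  rw [(monotone_cdf μ).continuousAt_iff_leftLim_eq_rightLim, (cdf μ).rightLim_eq]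
  have h := (cdf μ).measure_singleton a
  rw [measure_cdf, measure_singleton, eq_comm, ENNReal.ofReal_eq_zero] at h
  exact le_antisymm ((monotone_cdf μ).leftLim_le le_rfl) (by linarith)

lemma strictMono_cdf (h : volume ≪ μ) : StrictMono (cdf μ) := by
  intro s t hst
  have hpos : μ (Ioc s t) ≠ 0 := fun h0 => by
    simpa [Real.volume_Ioc, hst.not_ge] using h h0
  rw [← measure_cdf μ, StieltjesFunction.measure_Ioc, ne_eq, ENNReal.ofReal_eq_zero] at hpos
  linarith

lemma cdf_zero_of_map_neg [NullSingletonClass μ] (h : μ.map (fun x => -x) = μ) :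
    cdf μ 0 = 1 / 2 := by
  have hsymm : μ (Ici 0) = μ (Iic 0) := by
    conv_lhs => rw [← h]
    rw [Measure.map_apply measurable_neg measurableSet_Ici]
    congr 1; ext x; simp
  have hsum := measure_add_measure_compl (μ := μ) (measurableSet_Iic (a := (0:ℝ)))
  rw [compl_Iic, measure_congr Ioi_ae_eq_Ici, hsymm, measure_univ, ← ofReal_cdf] at hsum
  rw [← ENNReal.ofReal_add (cdf_nonneg μ 0) (cdf_nonneg μ 0), ← ENNReal.ofReal_one,
    ENNReal.ofReal_eq_ofReal_iff (by linarith [cdf_nonneg μ 0]) zero_le_one] at hsum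
  linarith

end cdf

lemma Phi_zero : Phi 0 = 1 / 2 :=
  have := nullSingletonClass_gaussianReal (μ := 0) one_ne_zero
  cdf_zero_of_map_neg _ (by rw [gaussianReal_map_neg, neg_zero])

lemma strictMono_Phi : StrictMono Phi :=
  strictMono_cdf _ (gaussianReal_absolutelyContinuous' 0 one_ne_zero)

lemma one_half_lt_Phi {t : ℝ} (ht : 0 < t) : 1 / 2 < Phi t :=
  Phi_zero ▸ strictMono_Phi ht

lemma Phi_PhiInv {p : ℝ} (h0 : 0 < p) (h1 : p < 1) : Phi (PhiInv p) = p := by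
  have := nullSingletonClass_gaussianReal (μ := 0) one_ne_zero
  obtain ⟨a, ha⟩ :=
    ((tendsto_cdf_atBot (gaussianReal 0 1)).eventually (eventually_le_nhds h0)).exists
  obtain ⟨b, hb⟩ :=
    ((tendsto_cdf_atTop (gaussianReal 0 1)).eventually (eventually_ge_nhds h1)).exists
  exact invFun_eq (intermediate_value_univ a b (continuous_cdf _) ⟨ha, hb⟩)

lemma gaussianReal_Iic_eq_ofReal_Phi (c : ℝ≥0) (hc : c ≠ 0) (b : ℝ) :
    gaussianReal 0 (c ^ 2) (Iic b) = ENNReal.ofReal (Phi (b / c)) := by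
  have hmap : (gaussianReal 0 1).map ((c : ℝ) * ·) = gaussianReal 0 (c ^ 2) := by
    rw [gaussianReal_map_const_mul]
    congr 1
    · simp
    · ext; simp
  have hc' : (0 : ℝ) < c := by positivity
  rw [← hmap, Measure.map_apply (measurable_const_mul _) measurableSet_Iic, Phi, ofReal_cdf]
  congr 1; ext x; simp [le_div_iff₀' hc']

section stdGaussian

variable {E : Type*} [NormedAddCommGroup E] [InnerProductSpace ℝ E] [FiniteDimensional ℝ E]
  [MeasurableSpace E] [BorelSpace E]

lemma stdGaussian_map_inner (v : E) :
    (stdGaussian E).map (fun x => ⟪v, x⟫) = gaussianReal 0 (‖v‖₊ ^ 2) := by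
  have h := IsGaussian.map_eq_gaussianReal (μ := stdGaussian E) (innerSL ℝ v)
  rw [integral_strongDual_stdGaussian, variance_dual_stdGaussian, innerSL_apply_norm] at h
  convert h using 2
  · ext; simp
  · ext; simp

lemma stdGaussian_setOf_inner_le {v : E} (hv : v ≠ 0) (b : ℝ) :
    stdGaussian E {x | ⟪v, x⟫ ≤ b} = ENNReal.ofReal (Phi (b / ‖v‖)) := by
  have hm : Measurable fun x : E => ⟪v, x⟫ := (innerSL ℝ v).continuous.measurable
  rw [← coe_nnnorm, ← gaussianReal_Iic_eq_ofReal_Phi _ (nnnorm_ne_zero_iff.2 hv),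
    ← stdGaussian_map_inner, Measure.map_apply hm measurableSet_Iic]
  rfl

end stdGaussian

lemma gaussPi_eq_map_smul (d : ℕ) (σ : ℝ) :
    gaussPi d σ = (stdGaussian (EuclideanSpace ℝ (Fin d))).map (σ • ·) := by
  have h1 : (gaussianReal 0 1).map (σ * ·) = gaussianReal 0 (σ ^ 2).toNNReal := by
    rw [gaussianReal_map_const_mul]
    congr 1
    · simp
    · ext; simp [sq_nonneg]
  rw [gaussPi, ← map_pi_eq_stdGaussian, Measure.map_map (by fun_prop) (by fun_prop), ← h1,
    ← Measure.pi_map_pi (fun _ => (measurable_const_mul σ).aemeasurable),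
    Measure.map_map (by fun_prop) (by fun_prop)]
  rfl

lemma gaussianReal_eq_withDensity_gaussianReal_zero {v : ℝ≥0} (hv : v ≠ 0) (m : ℝ) :
    gaussianReal m v = (gaussianReal 0 v).withDensity
      fun y => ENNReal.ofReal (Real.exp ((m * y - m ^ 2 / 2) / v)) := by
  rw [gaussianReal_of_var_ne_zero _ hv, gaussianReal_of_var_ne_zero _ hv,
    ← withDensity_mul _ (measurable_gaussianPDF _ _) (by fun_prop)]
  congr 1
  ext y
  rw [Pi.mul_apply, gaussianPDF, gaussianPDF, ← ENNReal.ofReal_mul (gaussianPDFReal_nonneg _ _ _)]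
  simp only [gaussianPDFReal, mul_assoc, ← Real.exp_add]
  congr 3
  have : (v : ℝ) ≠ 0 := by exact_mod_cast hv
  field_simp
  ring

section pi

variable {ι : Type*} [Fintype ι] {α : ι → Type*} [∀ i, MeasurableSpace (α i)]
  {μ : ∀ i, Measure (α i)} [∀ i, IsProbabilityMeasure (μ i)]

lemma lintegral_fintype_prod_eq_prod {g : ∀ i, α i → ℝ≥0∞} (hg : ∀ i, Measurable (g i)) :
    ∫⁻ x, ∏ i, g i (x i) ∂Measure.pi μ = ∏ i, ∫⁻ y, g i y ∂μ i := by
  rw [lintegral_prod_eq_prod_lintegral_of_indepFun _ _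
    (iIndepFun_pi fun i => (hg i).aemeasurable) fun i => (hg i).comp (measurable_pi_apply i)]
  refine Finset.prod_congr rfl fun i _ => ?_
  exact (measurePreserving_eval μ i).lintegral_comp (hg i)

lemma MeasureTheory.Measure.pi_withDensity {f : ∀ i, α i → ℝ≥0∞} (hf : ∀ i, Measurable (f i))
    [∀ i, SigmaFinite ((μ i).withDensity (f i))] :
    Measure.pi (fun i => (μ i).withDensity (f i))
      = (Measure.pi μ).withDensity fun x => ∏ i, f i (x i) := by
  refine Measure.pi_eq fun s hs => ?_
  have hbox : (univ.pi s).indicator (fun x => ∏ i, f i (x i))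
      = fun x => ∏ i, (s i).indicator (f i) (x i) := by
    ext x
    by_cases hx : x ∈ univ.pi s
    · simp [indicator_of_mem hx, indicator_of_mem (hx _ (mem_univ _))]
    · obtain ⟨i, -, hi⟩ := not_forall₂.1 hx
      rw [indicator_of_notMem hx]
      exact (Finset.prod_eq_zero (Finset.mem_univ i) (indicator_of_notMem hi _)).symm
  rw [withDensity_apply _ (MeasurableSet.univ_pi hs),
    ← lintegral_indicator (MeasurableSet.univ_pi hs), hbox, lintegral_fintype_prod_eq_prod fun i => (hf i).indicator (hs i)]
  refine Finset.prod_congr rfl fun i _ => ?_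
  rw [withDensity_apply _ (hs i), lintegral_indicator (hs i)]

end pi

lemma lintegral_stdGaussian_comp_add {ι : Type*} [Fintype ι] (δ : EuclideanSpace ℝ ι)
    {f : EuclideanSpace ℝ ι → ℝ≥0∞} (hf : Measurable f) :
    ∫⁻ x, f (x + δ) ∂stdGaussian (EuclideanSpace ℝ ι)
      = ∫⁻ x, f x * ENNReal.ofReal (Real.exp (⟪δ, x⟫ - ‖δ‖ ^ 2 / 2))
          ∂stdGaussian (EuclideanSpace ℝ ι) := by
  have hcoord : ∀ a : ℝ, (gaussianReal 0 1).map (· + a)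
      = (gaussianReal 0 1).withDensity fun y => ENNReal.ofReal (Real.exp (a * y - a ^ 2 / 2)) := by
    intro a
    rw [gaussianReal_map_add_const, zero_add,
      gaussianReal_eq_withDensity_gaussianReal_zero one_ne_zero, NNReal.coe_one]
    simp_rw [div_one]
  have hshift : (Measure.pi fun _ : ι => gaussianReal 0 1).map (fun y i => y i + δ i)
      = (Measure.pi fun _ : ι => gaussianReal 0 1).withDensity
          fun y => ∏ i, ENNReal.ofReal (Real.exp (δ i * y i - δ i ^ 2 / 2)) := by
    rw [Measure.pi_map_pi fun _ => (measurable_add_const _).aemeasurable]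
    simp_rw [hcoord]
    exact Measure.pi_withDensity fun i => by fun_prop
  have hR : ∀ y : ι → ℝ, ∏ i, ENNReal.ofReal (Real.exp (δ i * y i - δ i ^ 2 / 2))
      = ENNReal.ofReal (Real.exp (⟪δ, WithLp.toLp 2 y⟫ - ‖δ‖ ^ 2 / 2)) := by
    intro y
    rw [← ENNReal.ofReal_prod_of_nonneg fun _ _ => (Real.exp_pos _).le, ← Real.exp_sum,
      Finset.sum_sub_distrib, ← Finset.sum_div, EuclideanSpace.real_norm_sq_eq]
    simp [PiLp.inner_apply, mul_comm]
  have hf' : Measurable fun y : ι → ℝ => f (WithLp.toLp 2 y) := hf.comp (by fun_prop)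
  rw [← map_pi_eq_stdGaussian, lintegral_map (f := fun x => f (x + δ)) (by fun_prop) (by fun_prop),
    lintegral_map (by fun_prop) (by fun_prop)]
  calc ∫⁻ y, f (WithLp.toLp 2 y + δ) ∂Measure.pi (fun _ : ι => gaussianReal 0 1)
      = ∫⁻ y, f (WithLp.toLp 2 y) ∂(Measure.pi fun _ : ι => gaussianReal 0 1).map
          (fun y i => y i + δ i) := (lintegral_map hf' (by fun_prop)).symm
    _ = _ := by
      rw [hshift, lintegral_withDensity_eq_lintegral_mul _ (by fun_prop) hf']
      simp_rw [Pi.mul_apply, hR, mul_comm]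

lemma setLIntegral_le_lintegral_mul_of_threshold {α : Type*} [MeasurableSpace α] {μ : Measure α}
    [IsFiniteMeasure μ] {f R : α → ℝ≥0∞} {A : Set α} {r : ℝ≥0∞}
    (hf : Measurable f) (hR : Measurable R) (hA : MeasurableSet A) (hf1 : ∀ x, f x ≤ 1)
    (hr : r ≠ ∞) (hRA : ∀ x ∈ A, R x ≤ r) (hRAc : ∀ x ∉ A, r ≤ R x)
    (hμA : μ A ≤ ∫⁻ x, f x ∂μ) :
    ∫⁻ x in A, R x ∂μ ≤ ∫⁻ x, f x * R x ∂μ := by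
  have hpoint : ∀ x, A.indicator R x + r * f x ≤ f x * R x + r * A.indicator 1 x := by
    intro x
    by_cases hx : x ∈ A
    · have hsplit : f x + (1 - f x) = 1 := add_tsub_cancel_of_le (hf1 x)
      simp only [indicator_of_mem hx, Pi.one_apply, mul_one]
      calc R x + r * f x = f x * R x + (1 - f x) * R x + r * f x := by
            rw [← add_mul, hsplit, one_mul]
        _ ≤ f x * R x + (1 - f x) * r + r * f x := by gcongr; exact hRA x hx
        _ = f x * R x + r := by
            rw [add_assoc, mul_comm r, ← add_mul, add_comm (1 - f x), hsplit, one_mul]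
    · simp only [indicator_of_notMem hx, zero_add, mul_zero, add_zero]
      rw [mul_comm]
      gcongr
      exact hRAc x hx
  have hint := lintegral_mono (μ := μ) hpoint
  rw [lintegral_add_left (hR.indicator hA),
    lintegral_add_left (f := fun x => f x * R x) (hf.mul hR),
    lintegral_const_mul _ hf, lintegral_const_mul _ (measurable_one.indicator hA),
    lintegral_indicator hA, lintegral_indicator_one hA] at hint
  have hfin : r * ∫⁻ x, f x ∂μ ≠ ∞ :=
    ENNReal.mul_ne_top hr (ne_top_of_le_ne_top (measure_ne_top μ univ)
      ((lintegral_mono hf1).trans_eq (by simp)))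
  exact (ENNReal.add_le_add_iff_right hfin).1 (hint.trans (by gcongr))

section shift

variable {ι : Type*} [Fintype ι] {δ : EuclideanSpace ℝ ι}

lemma setLIntegral_inner_le_stdGaussian (hδ : δ ≠ 0) (t : ℝ) :
    ∫⁻ x in {x | ⟪δ, x⟫ ≤ t * ‖δ‖}, ENNReal.ofReal (Real.exp (⟪δ, x⟫ - ‖δ‖ ^ 2 / 2))
        ∂stdGaussian (EuclideanSpace ℝ ι)
      = ENNReal.ofReal (Phi (t - ‖δ‖)) := by
  set A := {x : EuclideanSpace ℝ ι | ⟪δ, x⟫ ≤ t * ‖δ‖}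
  have hA : MeasurableSet A := measurableSet_le (by fun_prop) (by fun_prop)
  have hpre : (· + δ) ⁻¹' A = {x | ⟪δ, x⟫ ≤ t * ‖δ‖ - ‖δ‖ ^ 2} := by
    ext x
    simp [A, inner_add_right, le_sub_iff_add_le]
  rw [← lintegral_indicator hA]
  calc ∫⁻ x, A.indicator (fun x => ENNReal.ofReal (Real.exp (⟪δ, x⟫ - ‖δ‖ ^ 2 / 2))) x
        ∂stdGaussian (EuclideanSpace ℝ ι)
      = ∫⁻ x, A.indicator 1 x * ENNReal.ofReal (Real.exp (⟪δ, x⟫ - ‖δ‖ ^ 2 / 2))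
          ∂stdGaussian (EuclideanSpace ℝ ι) := by
        congr 1 with x
        by_cases hx : x ∈ A <;> simp [hx]
    _ = ∫⁻ x, A.indicator 1 (x + δ) ∂stdGaussian (EuclideanSpace ℝ ι) :=
        (lintegral_stdGaussian_comp_add δ (measurable_one.indicator hA)).symm
    _ = stdGaussian (EuclideanSpace ℝ ι) ((· + δ) ⁻¹' A) :=
        lintegral_indicator_one (measurable_add_const δ hA)
    _ = ENNReal.ofReal (Phi (t - ‖δ‖)) := by
        rw [hpre, stdGaussian_setOf_inner_le hδ]
        congr 2
        field_simp [norm_ne_zero_iff.2 hδ]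

lemma ofReal_Phi_sub_norm_le_lintegral_comp_add (hδ : δ ≠ 0) {f : EuclideanSpace ℝ ι → ℝ≥0∞}
    (hf : Measurable f) (hf1 : ∀ x, f x ≤ 1) {t : ℝ}
    (ht : ENNReal.ofReal (Phi t) ≤ ∫⁻ x, f x ∂stdGaussian (EuclideanSpace ℝ ι)) :
    ENNReal.ofReal (Phi (t - ‖δ‖)) ≤ ∫⁻ x, f (x + δ) ∂stdGaussian (EuclideanSpace ℝ ι) := by
  have hA : MeasurableSet {x : EuclideanSpace ℝ ι | ⟪δ, x⟫ ≤ t * ‖δ‖} :=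
    measurableSet_le (by fun_prop) (by fun_prop)
  have hμA : stdGaussian _ {x : EuclideanSpace ℝ ι | ⟪δ, x⟫ ≤ t * ‖δ‖}
      = ENNReal.ofReal (Phi t) := by
    rw [stdGaussian_setOf_inner_le hδ, mul_div_cancel_right₀ _ (norm_ne_zero_iff.2 hδ)]
  rw [← setLIntegral_inner_le_stdGaussian hδ, lintegral_stdGaussian_comp_add δ hf]
  refine setLIntegral_le_lintegral_mul_of_threshold (r := ENNReal.ofReal
    (Real.exp (t * ‖δ‖ - ‖δ‖ ^ 2 / 2))) hf (by fun_prop) hA hf1 ENNReal.ofReal_ne_top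
    (fun x hx => ?_) (fun x hx => ?_) (hμA.trans_le ht)
  · exact ENNReal.ofReal_le_ofReal (Real.exp_le_exp.2 (by linarith [show ⟪δ, x⟫ ≤ t * ‖δ‖ from hx]))
  · exact ENNReal.ofReal_le_ofReal (Real.exp_le_exp.2
      (by linarith [not_le.1 (show ¬ ⟪δ, x⟫ ≤ t * ‖δ‖ from hx)]))

theorem Phi_sub_norm_le_integral_comp_add {f : EuclideanSpace ℝ ι → ℝ} (hf : Measurable f)
    (hf01 : ∀ x, f x ∈ Icc 0 1) {t : ℝ}
    (ht : Phi t ≤ ∫ x, f x ∂stdGaussian (EuclideanSpace ℝ ι)) :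
    Phi (t - ‖δ‖) ≤ ∫ x, f (x + δ) ∂stdGaussian (EuclideanSpace ℝ ι) := by
  rcases eq_or_ne δ 0 with rfl | hδ
  · simpa using ht
  have hofReal : ∀ y, ENNReal.ofReal (∫ x, f (x + y) ∂stdGaussian (EuclideanSpace ℝ ι))
      = ∫⁻ x, ENNReal.ofReal (f (x + y)) ∂stdGaussian (EuclideanSpace ℝ ι) :=
    fun y => ofReal_integral_eq_lintegral_ofReal
      (Integrable.of_mem_Icc 0 1 (by fun_prop) (ae_of_all _ fun x => hf01 _))
      (ae_of_all _ fun x => (hf01 _).1)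
  have h0 := hofReal 0
  simp only [add_zero] at h0
  rw [← ENNReal.ofReal_le_ofReal_iff (integral_nonneg fun x => (hf01 _).1), hofReal]
  exact ofReal_Phi_sub_norm_le_lintegral_comp_add hδ (by fun_prop)
    (fun x => ENNReal.ofReal_le_one.2 (hf01 x).2) ((ENNReal.ofReal_le_ofReal ht).trans_eq h0)

end shift

/-- Binary randomized smoothing certificate: if the smoothed score of class 1 at `x`
exceeds 1/2, it still exceeds 1/2 within the radius `σ Φ⁻¹(p)`. -/
theorem binary_smoothing_certificate
    (d : ℕ) (σ : ℝ) (hσ : 0 < σ)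
    (g1 : EuclideanSpace ℝ (Fin d) → ℝ) (hg : Measurable g1)
    (hg01 : ∀ z, g1 z ∈ Set.Icc (0 : ℝ) 1)
    (gSmooth : EuclideanSpace ℝ (Fin d) → ℝ)
    (hgSmooth : ∀ x, gSmooth x = ∫ ε, g1 (x + ε) ∂(gaussPi d σ))
    (x : EuclideanSpace ℝ (Fin d)) (p : ℝ) (hp : p = gSmooth x) (hphalf : 1 / 2 < p) :
    ∀ δ : EuclideanSpace ℝ (Fin d), ‖δ‖ < σ * PhiInv p → 1 / 2 < gSmooth (x + δ) := by
  intro δ hδ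
  have hsmooth : ∀ y, gSmooth y = ∫ z, g1 (y + σ • z) ∂stdGaussian _ := fun y => by
    rw [hgSmooth, gaussPi_eq_map_smul, integral_map (by fun_prop)
      (f := fun ε => g1 (y + ε)) (hg.comp (measurable_const_add y)).aestronglyMeasurable]
  have hcert : ∀ t, Phi t ≤ p → ‖δ‖ < σ * t → 1 / 2 < gSmooth (x + δ) := by
    intro t ht hδt
    have hnorm : ‖σ⁻¹ • δ‖ = ‖δ‖ / σ := by
      rw [norm_smul, norm_inv, Real.norm_of_nonneg hσ.le, inv_mul_eq_div]
    calc 1 / 2 < Phi (t - ‖σ⁻¹ • δ‖) :=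
          one_half_lt_Phi (by rwa [hnorm, sub_pos, div_lt_iff₀' hσ])
      _ ≤ ∫ z, g1 (x + σ • (z + σ⁻¹ • δ)) ∂stdGaussian _ :=
          Phi_sub_norm_le_integral_comp_add (f := fun z => g1 (x + σ • z)) (by fun_prop)
            (fun z => hg01 _) (by rwa [hp, hsmooth] at ht)
      _ = gSmooth (x + δ) := by
          rw [hsmooth]
          congr 1 with z
          rw [smul_add, smul_inv_smul₀ hσ.ne', ← add_assoc, add_right_comm]
  rcases lt_or_ge p 1 with hp1 | hp1
  · exact hcert _ (Phi_PhiInv (by linarith) hp1).le hδ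
  -- `PhiInv p` is a junk value when `1 ≤ p`, but then every level `t` is certified.
  · exact hcert (‖δ‖ / σ + 1) ((cdf_le_one _ _).trans hp1)
      (by rw [mul_add, mul_div_cancel₀ _ hσ.ne']; linarith)
end

section
/- Let ℓ ∈ ℝ, u ∈ ℝ with ℓ < 0 < u. The convex hull of the graph {(z, ReLU(z)) : z ∈ [ℓ, u]} ⊆ ℝ² is exactly the triangle {(z, t) : t ≥ 0, t ≥ z, t ≤ (u/(u−ℓ))(z − ℓ)}. -/
/-!
The convex hull of the graph of a convex function `f` on `[a, b]` is the region between the graph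
and the chord through `(a, f a)` and `(b, f b)`. That region is convex, being an epigraph cut by a
half-plane, and each of its points lies on a vertical segment joining a point of the graph to a
point of the chord, which is itself a convex combination of the two endpoints of the graph.
For `ReLU` on `[ℓ, u]` with `ℓ < 0 < u` the region is the triangle.
-/

open Set

section ConvexHullGraph

variable {𝕜 : Type*} [Field 𝕜] [LinearOrder 𝕜] [IsStrictOrderedRing 𝕜]

lemma convex_setOf_snd_le_affine (c m a : 𝕜) :
    Convex 𝕜 {p : 𝕜 × 𝕜 | p.2 ≤ c + m * (p.1 - a)} := by
  rintro ⟨z₁, t₁⟩ h₁ ⟨z₂, t₂⟩ h₂ μ ν hμ hν hμν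
  simp only [mem_ofPred_eq, Prod.smul_mk, Prod.mk_add_mk, smul_eq_mul] at h₁ h₂ ⊢
  have hc : c = μ * c + ν * c := by rw [← add_mul, hμν, one_mul]
  have ha : a = μ * a + ν * a := by rw [← add_mul, hμν, one_mul]
  rw [hc, ha]
  nlinarith [mul_le_mul_of_nonneg_left h₁ hμ, mul_le_mul_of_nonneg_left h₂ hν]

lemma ConvexOn.le_add_slope_mul {f : 𝕜 → 𝕜} {a b z : 𝕜} (hf : ConvexOn 𝕜 (Icc a b) f)
    (hz : z ∈ Icc a b) : f z ≤ f a + slope f a b * (z - a) := by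
  rcases hz.1.eq_or_lt with rfl | haz
  · simp
  have hab : a < b := haz.trans_le hz.2
  have hmono : slope f a z ≤ slope f a b :=
    hf.monotoneOn_slope_gt (left_mem_Icc.2 hab.le) ⟨hz, haz⟩ ⟨right_mem_Icc.2 hab.le, hab⟩ hz.2
  have hfz : (z - a) * slope f a z = f z - f a := sub_smul_slope f a z
  nlinarith [mul_le_mul_of_nonneg_left hmono (sub_nonneg.2 hz.1)]

lemma mk_add_slope_mul_mem_convexHull_graph {f : 𝕜 → 𝕜} {a b z : 𝕜} (hz : z ∈ Icc a b) :
    (z, f a + slope f a b * (z - a)) ∈ convexHull 𝕜 {p : 𝕜 × 𝕜 | p.1 ∈ Icc a b ∧ p.2 = f p.1} := by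
  set G := {p : 𝕜 × 𝕜 | p.1 ∈ Icc a b ∧ p.2 = f p.1}
  rcases hz.1.eq_or_lt with rfl | haz
  · exact subset_convexHull 𝕜 G ⟨hz, by simp⟩
  have hab : a < b := haz.trans_le hz.2
  have hba : 0 < b - a := sub_pos.2 hab
  have hθ : 0 ≤ (z - a) / (b - a) := div_nonneg (sub_nonneg.2 hz.1) hba.le
  have hθ' : 0 ≤ 1 - (z - a) / (b - a) := by
    rw [sub_nonneg, div_le_one hba]
    linarith [hz.2]
  have hA : (a, f a) ∈ G := ⟨left_mem_Icc.2 hab.le, rfl⟩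
  have hB : (b, f b) ∈ G := ⟨right_mem_Icc.2 hab.le, rfl⟩
  have hcombo := convex_convexHull 𝕜 G (subset_convexHull 𝕜 G hA) (subset_convexHull 𝕜 G hB)
    hθ' hθ (sub_add_cancel _ _)
  convert hcombo using 1
  simp only [Prod.smul_mk, Prod.mk_add_mk, smul_eq_mul, slope_def_field, Prod.mk.injEq]
  constructor <;> field_simp <;> ring

theorem ConvexOn.convexHull_graph_eq {f : 𝕜 → 𝕜} {a b : 𝕜} (hf : ConvexOn 𝕜 (Icc a b) f) :
    convexHull 𝕜 {p : 𝕜 × 𝕜 | p.1 ∈ Icc a b ∧ p.2 = f p.1} =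
      {p : 𝕜 × 𝕜 | p.1 ∈ Icc a b ∧ f p.1 ≤ p.2 ∧ p.2 ≤ f a + slope f a b * (p.1 - a)} := by
  set G := {p : 𝕜 × 𝕜 | p.1 ∈ Icc a b ∧ p.2 = f p.1}
  apply Subset.antisymm
  · refine convexHull_min ?_ ?_
    · rintro ⟨z, t⟩ ⟨hz, rfl : t = f z⟩
      exact ⟨hz, le_rfl, hf.le_add_slope_mul hz⟩
    · simpa only [ofPred_and, inter_assoc] using
        hf.convex_epigraph.inter (convex_setOf_snd_le_affine (f a) (slope f a b) a)
  · rintro ⟨z, t⟩ ⟨hz, hft, htc⟩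
    have hseg := (convex_convexHull 𝕜 G).segment_subset
      (subset_convexHull 𝕜 G (⟨hz, rfl⟩ : (z, f z) ∈ G)) (mk_add_slope_mul_mem_convexHull_graph hz)
    rw [← Prod.image_mk_segment_right, segment_eq_Icc (hft.trans htc)] at hseg
    exact hseg ⟨t, ⟨hft, htc⟩, rfl⟩

end ConvexHullGraph

/-- Triangle relaxation of ReLU: for `ℓ < 0 < u`, the convex hull of the graph of
`ReLU` over `[ℓ, u]` is exactly the triangle described by the three linear inequalities
`t ≥ 0`, `t ≥ z`, `t ≤ (u/(u−ℓ))(z − ℓ)`. -/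
theorem relu_triangle_relaxation (l u : ℝ) (hl : l < 0) (hu : 0 < u) :
    convexHull ℝ {p : ℝ × ℝ | p.1 ∈ Set.Icc l u ∧ p.2 = max 0 p.1} =
      {p : ℝ × ℝ | 0 ≤ p.2 ∧ p.1 ≤ p.2 ∧ p.2 ≤ u / (u - l) * (p.1 - l)} := by
  have hrelu : ConvexOn ℝ (Icc l u) (fun z : ℝ ↦ max 0 z) :=
    (convexOn_const 0 (convex_Icc l u)).sup (convexOn_id (convex_Icc l u))
  have hslope : slope (fun z : ℝ ↦ max 0 z) l u = u / (u - l) := by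
    rw [slope_def_field, max_eq_left hl.le, max_eq_right hu.le, sub_zero]
  rw [hrelu.convexHull_graph_eq, hslope, max_eq_left hl.le]
  ext ⟨z, t⟩
  simp only [mem_ofPred_eq, mem_Icc, max_le_iff, zero_add]
  refine ⟨fun ⟨_, ht, hc⟩ ↦ ⟨ht.1, ht.2, hc⟩, fun ⟨h0, hz, hc⟩ ↦ ⟨?_, ⟨h0, hz⟩, hc⟩⟩
  have hul : 0 < u - l := by linarith
  have hc' : t * (u - l) ≤ u * (z - l) := by
    rw [div_mul_eq_mul_div, le_div_iff₀ hul] at hc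
    exact hc
  constructor <;> nlinarith
end
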